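/- Schweikart's constant bound: there exists a universal constant τ = log(1 + √2) such that for every hyperbolic geodesic A in the hyperbolic plane not passing through the origin, with summit ẑ_A the point of A closest to the origin, and for each endpoint η ∈ ∂ℍ² of A, the geodesic ray s_η from the origin to η satisfies min{ d(w, ẑ_A) : w ∈ s_η } < τ. -/

import Mathlib

/-!
Lift the disc to the hyperboloid `x ↦ ((1 + ‖x‖²)/(1 - ‖x‖²), 2x/(1 - ‖x‖²))`, on which
`cosh d` is the Minkowski form `B`. For a unit-speed geodesic `c` with lift `X`, the vector
`X s + X u - 2 cosh ((u - s)/2) X ((s + u)/2)` is lightlike and `B`-orthogonal to the timelike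
`X ((s + u)/2)`, so its time part vanishes: the height `F t = cosh d(0, c t)` satisfies a
d'Alembert-type midpoint equation. Since `F` is minimal at the summit `t₀`, the odd part of
`F (t₀ + x) - F t₀ cosh x` is `O(x²)` and is multiplied by `2 cosh` under doubling, hence
vanishes: `F t = F t₀ cosh (t - t₀)` (hyperbolic Pythagoras). Dividing
`B (X t₀, X t) = cosh (t - t₀)` by `F t` and letting `t → ∞` gives `B (X t₀, (1, η)) = 1 / A`
with `A = F t₀`. On the ray towards `η`, at the point of height `cosh σ`, this makes
`cosh d = A e^{-σ} + sinh σ / A`, whose minimum over `σ` is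
`√(2 - 1/A²) < √2 = cosh (log (1 + √2))`.
-/

open Real

/-- Inverse hyperbolic cosine. -/
noncomputable def arcosh (x : ℝ) : ℝ := Real.log (x + Real.sqrt (x ^ 2 - 1))

/-- The hyperbolic distance in the Poincaré ball model (on the open unit ball). -/
noncomputable def hDist {n : ℕ} (x y : EuclideanSpace ℝ (Fin n)) : ℝ :=
  _root_.arcosh (1 + 2 * ‖x - y‖ ^ 2 / ((1 - ‖x‖ ^ 2) * (1 - ‖y‖ ^ 2)))

open Filter Topology

lemma arcosh_sqrt_two : Real.arcosh √2 = log (1 + √2) := by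
  rw [Real.arcosh, sq_sqrt zero_le_two]
  norm_num [add_comm]

lemma cosh_sub_one_le_abs_sinh_mul_abs_sinh_half (y : ℝ) :
    cosh y - 1 ≤ |sinh y| * |sinh (y / 2)| := by
  have hy : y = 2 * (y / 2) := by ring
  rw [hy, cosh_two_mul, sinh_two_mul, cosh_sq, abs_mul, abs_mul, abs_two,
    abs_of_pos (cosh_pos _), ← hy]
  nlinarith [one_le_cosh (y / 2), abs_nonneg (sinh (y / 2)), sq_abs (sinh (y / 2))]

lemma eq_zero_of_cosh_doubling {g : ℝ → ℝ} {C : ℝ}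
    (hdouble : ∀ x, g (2 * x) = 2 * cosh x * g x) (hbound : ∀ x, |g x| ≤ C * (cosh x - 1))
    (x : ℝ) : g x = 0 := by
  rcases eq_or_ne x 0 with rfl | hx
  · simpa using hbound 0
  have hiter : ∀ k : ℕ, g x * sinh (x / 2 ^ k) = sinh x * g (x / 2 ^ k) := by
    intro k
    induction k with
    | zero => simp [mul_comm]
    | succ k ih =>
      have hhalf : x / 2 ^ k = 2 * (x / 2 ^ (k + 1)) := by rw [pow_succ]; field_simp
      rw [hhalf, hdouble, sinh_two_mul] at ih
      refine mul_left_cancel₀ (mul_pos two_pos (cosh_pos (x / 2 ^ (k + 1)))).ne' ?_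
      linear_combination ih
  have hle : ∀ k : ℕ, |g x| ≤ |C| * |sinh x| * |sinh (x / 2 ^ k / 2)| := by
    intro k
    have hsinh : 0 < |sinh (x / 2 ^ k)| := by simp [hx]
    refine le_of_mul_le_mul_right ?_ hsinh
    calc |g x| * |sinh (x / 2 ^ k)| = |sinh x| * |g (x / 2 ^ k)| := by
          rw [← abs_mul, hiter, abs_mul]
      _ ≤ |sinh x| * (|C| * (cosh (x / 2 ^ k) - 1)) := by
          gcongr
          exact (hbound _).trans
            (mul_le_mul_of_nonneg_right (le_abs_self C) (by linarith [one_le_cosh (x / 2 ^ k)]))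
      _ ≤ |sinh x| * (|C| * (|sinh (x / 2 ^ k)| * |sinh (x / 2 ^ k / 2)|)) := by
          gcongr
          exact cosh_sub_one_le_abs_sinh_mul_abs_sinh_half _
      _ = |C| * |sinh x| * |sinh (x / 2 ^ k / 2)| * |sinh (x / 2 ^ k)| := by ring
  have hlim : Tendsto (fun k : ℕ ↦ |C| * |sinh x| * |sinh (x / 2 ^ k / 2)|) atTop (𝓝 0) := by
    have hpow : Tendsto (fun k : ℕ ↦ x / 2 ^ k) atTop (𝓝 0) :=
      (tendsto_pow_atTop_atTop_of_one_lt one_lt_two).const_div_atTop x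
    have hhalf : Tendsto (fun k : ℕ ↦ x / 2 ^ k / 2) atTop (𝓝 0) := by
      simpa using hpow.div_const 2
    simpa using (((continuous_abs.comp continuous_sinh).tendsto 0).comp hhalf).const_mul
      (|C| * |sinh x|)
  exact abs_nonpos_iff.mp (ge_of_tendsto' hlim hle)

lemma eq_mul_cosh_of_midpoint {f : ℝ → ℝ} {t₀ : ℝ}
    (hmid : ∀ s u, f s + f u = 2 * cosh ((u - s) / 2) * f ((s + u) / 2))
    (hmin : ∀ t, f t₀ ≤ f t) (t : ℝ) : f t = f t₀ * cosh (t - t₀) := by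
  set g : ℝ → ℝ := fun x ↦ f (t₀ + x) - f t₀ * cosh x with hg
  have hodd : ∀ x, g (-x) = -g x := by
    intro x
    have h := hmid (t₀ - x) (t₀ + x)
    rw [show (t₀ + x - (t₀ - x)) / 2 = x by ring, show (t₀ - x + (t₀ + x)) / 2 = t₀ by ring] at h
    simp only [hg, cosh_neg, ← sub_eq_add_neg]
    linarith
  have hdouble : ∀ x, g (2 * x) = 2 * cosh x * g x := by
    intro x
    have h := hmid t₀ (t₀ + 2 * x)
    rw [show (t₀ + 2 * x - t₀) / 2 = x by ring, show (t₀ + (t₀ + 2 * x)) / 2 = t₀ + x by ring] at h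
    simp only [hg, cosh_two_mul, sinh_sq]
    linear_combination h
  have hlower : ∀ x, -(f t₀ * (cosh x - 1)) ≤ g x := fun x ↦ by
    simp only [hg]; linarith [hmin (t₀ + x)]
  have hbound : ∀ x, |g x| ≤ f t₀ * (cosh x - 1) := fun x ↦ by
    refine abs_le.mpr ⟨hlower x, ?_⟩
    have h := hlower (-x)
    rw [hodd, cosh_neg] at h
    linarith
  have h := eq_zero_of_cosh_doubling hdouble hbound (t - t₀)
  simp only [hg, add_sub_cancel] at h
  linarith

open scoped RealInnerProductSpace

namespace PoincareBall

section Minkowski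

variable {E : Type*} [NormedAddCommGroup E] [InnerProductSpace ℝ E]

def minkowski (X Y : ℝ × E) : ℝ := X.1 * Y.1 - ⟪X.2, Y.2⟫

lemma minkowski_comm (X Y : ℝ × E) : minkowski X Y = minkowski Y X := by
  simp only [minkowski, mul_comm, real_inner_comm]

lemma minkowski_add_right (X Y Z : ℝ × E) :
    minkowski X (Y + Z) = minkowski X Y + minkowski X Z := by
  simp only [minkowski, Prod.fst_add, Prod.snd_add, inner_add_right]; ring

lemma minkowski_sub_right (X Y Z : ℝ × E) :
    minkowski X (Y - Z) = minkowski X Y - minkowski X Z := by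
  simp only [minkowski, Prod.fst_sub, Prod.snd_sub, inner_sub_right]; ring

lemma minkowski_smul_right (a : ℝ) (X Y : ℝ × E) :
    minkowski X (a • Y) = a * minkowski X Y := by
  simp only [minkowski, Prod.smul_fst, Prod.smul_snd, smul_eq_mul, real_inner_smul_right]; ring

lemma minkowski_add_left (X Y Z : ℝ × E) :
    minkowski (X + Y) Z = minkowski X Z + minkowski Y Z := by
  simp only [minkowski_comm _ Z, minkowski_add_right]

lemma minkowski_sub_left (X Y Z : ℝ × E) :
    minkowski (X - Y) Z = minkowski X Z - minkowski Y Z := by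
  simp only [minkowski_comm _ Z, minkowski_sub_right]

lemma minkowski_smul_left (a : ℝ) (X Y : ℝ × E) :
    minkowski (a • X) Y = a * minkowski X Y := by
  simp only [minkowski_comm _ Y, minkowski_smul_right]

lemma continuous_minkowski_right (X : ℝ × E) : Continuous (minkowski X) := by
  unfold minkowski; fun_prop

-- Reverse Cauchy–Schwarz for the Minkowski form.
lemma fst_eq_zero_of_minkowski_eq_zero {X Y : ℝ × E} (hX : 0 < minkowski X X)
    (hY : minkowski Y Y = 0) (hXY : minkowski X Y = 0) : Y.1 = 0 := by
  simp only [minkowski, real_inner_self_eq_norm_sq] at hX hY hXY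
  have hcs : ⟪X.2, Y.2⟫ ^ 2 ≤ ‖X.2‖ ^ 2 * ‖Y.2‖ ^ 2 := by
    rw [← mul_pow, ← sq_abs]
    exact pow_le_pow_left₀ (abs_nonneg _) (abs_real_inner_le_norm _ _) 2
  rw [show ⟪X.2, Y.2⟫ = X.1 * Y.1 by linarith, show ‖Y.2‖ ^ 2 = Y.1 * Y.1 by linarith] at hcs
  by_contra h
  nlinarith [mul_pos hX (mul_self_pos.mpr h)]

lemma fst_add_fst_eq_of_minkowski {P M Q : ℝ × E} {k : ℝ} (hP : minkowski P P = 1)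
    (hM : minkowski M M = 1) (hQ : minkowski Q Q = 1) (hPM : minkowski P M = k)
    (hMQ : minkowski M Q = k) (hPQ : minkowski P Q = 2 * k ^ 2 - 1) :
    P.1 + Q.1 = 2 * k * M.1 := by
  have hQP : minkowski Q P = 2 * k ^ 2 - 1 := by rw [minkowski_comm, hPQ]
  have hMP : minkowski M P = k := by rw [minkowski_comm, hPM]
  have hQM : minkowski Q M = k := by rw [minkowski_comm, hMQ]
  have hMY : minkowski M (P + Q - (2 * k) • M) = 0 := by
    simp only [minkowski_sub_right, minkowski_add_right, minkowski_smul_right, hMP, hMQ, hM]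
    ring
  have hYY : minkowski (P + Q - (2 * k) • M) (P + Q - (2 * k) • M) = 0 := by
    simp only [minkowski_sub_left, minkowski_add_left, minkowski_smul_left, minkowski_sub_right,
      minkowski_add_right, minkowski_smul_right, hP, hQ, hM, hPQ, hQP, hPM, hMP, hMQ, hQM]
    ring
  have h := fst_eq_zero_of_minkowski_eq_zero (hM ▸ one_pos) hYY hMY
  simp only [Prod.fst_sub, Prod.fst_add, Prod.smul_fst, smul_eq_mul] at h
  linarith

end Minkowski

lemma one_sub_norm_sq_pos {F : Type*} [SeminormedAddGroup F] {x : F} (hx : ‖x‖ < 1) :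
    0 < 1 - ‖x‖ ^ 2 := by
  nlinarith [norm_nonneg x]

section Hyperboloid

variable {E : Type*} [NormedAddCommGroup E] [InnerProductSpace ℝ E] {x y : E}

noncomputable def toHyperboloid (x : E) : ℝ × E :=
  ((1 + ‖x‖ ^ 2) / (1 - ‖x‖ ^ 2), (2 / (1 - ‖x‖ ^ 2)) • x)

lemma minkowski_toHyperboloid (hx : ‖x‖ < 1) (hy : ‖y‖ < 1) :
    minkowski (toHyperboloid x) (toHyperboloid y) =
      1 + 2 * ‖x - y‖ ^ 2 / ((1 - ‖x‖ ^ 2) * (1 - ‖y‖ ^ 2)) := by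
  have hx' := one_sub_norm_sq_pos hx
  have hy' := one_sub_norm_sq_pos hy
  simp only [minkowski, toHyperboloid, real_inner_smul_left, real_inner_smul_right,
    norm_sub_sq_real]
  field_simp
  ring

lemma one_le_minkowski_toHyperboloid (hx : ‖x‖ < 1) (hy : ‖y‖ < 1) :
    1 ≤ minkowski (toHyperboloid x) (toHyperboloid y) := by
  have := one_sub_norm_sq_pos hx
  have := one_sub_norm_sq_pos hy
  rw [minkowski_toHyperboloid hx hy]
  have : 0 ≤ 2 * ‖x - y‖ ^ 2 / ((1 - ‖x‖ ^ 2) * (1 - ‖y‖ ^ 2)) := by positivity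
  linarith

lemma minkowski_toHyperboloid_self (hx : ‖x‖ < 1) :
    minkowski (toHyperboloid x) (toHyperboloid x) = 1 := by
  simp [minkowski_toHyperboloid hx hx]

lemma minkowski_toHyperboloid_zero_left (X : ℝ × E) :
    minkowski (toHyperboloid (0 : E)) X = X.1 := by
  simp [minkowski, toHyperboloid]

lemma one_le_fst_toHyperboloid (hx : ‖x‖ < 1) : 1 ≤ (toHyperboloid x).1 := by
  simpa [minkowski_toHyperboloid_zero_left] using
    one_le_minkowski_toHyperboloid (by simp : ‖(0 : E)‖ < 1) hx

lemma fst_toHyperboloid_pos (hx : ‖x‖ < 1) : 0 < (toHyperboloid x).1 :=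
  one_pos.trans_le (one_le_fst_toHyperboloid hx)

lemma inv_fst_smul_toHyperboloid (hx : ‖x‖ < 1) :
    (toHyperboloid x).1⁻¹ • toHyperboloid x = (1, (2 / (1 + ‖x‖ ^ 2)) • x) := by
  have := one_sub_norm_sq_pos hx
  ext
  · simp only [toHyperboloid, Prod.smul_fst, smul_eq_mul]
    field_simp
  · simp only [toHyperboloid, Prod.smul_snd, smul_smul]
    congr 1
    field_simp

end Hyperboloid

section Disc

variable {n : ℕ} {x y : EuclideanSpace ℝ (Fin n)}

lemma hDist_eq_arcosh (hx : ‖x‖ < 1) (hy : ‖y‖ < 1) :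
    hDist x y = Real.arcosh (minkowski (toHyperboloid x) (toHyperboloid y)) := by
  rw [minkowski_toHyperboloid hx hy]
  rfl

lemma cosh_hDist (hx : ‖x‖ < 1) (hy : ‖y‖ < 1) :
    cosh (hDist x y) = minkowski (toHyperboloid x) (toHyperboloid y) := by
  rw [hDist_eq_arcosh hx hy, cosh_arcosh (one_le_minkowski_toHyperboloid hx hy)]

lemma hDist_zero_left (hx : ‖x‖ < 1) : hDist 0 x = Real.arcosh (toHyperboloid x).1 := by
  rw [hDist_eq_arcosh (by simp) hx, minkowski_toHyperboloid_zero_left]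

lemma exists_hDist_smul_lt_log_one_add_sqrt_two {z η : EuclideanSpace ℝ (Fin n)}
    (hz : ‖z‖ < 1) (hη : ‖η‖ = 1)
    (hperp : minkowski (toHyperboloid z) (1, η) = (toHyperboloid z).1⁻¹) :
    ∃ u : ℝ, 0 ≤ u ∧ u < 1 ∧ hDist (u • η) z < log (1 + √2) := by
  set A := (toHyperboloid z).1
  have hA : 1 ≤ A := one_le_fst_toHyperboloid hz
  have hinner : ⟪η, (toHyperboloid z).2⟫ = A - A⁻¹ := by
    rw [minkowski, real_inner_comm] at hperp
    linarith
  set S := √(2 * A ^ 2 - 1)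
  have hS2 : S ^ 2 = 2 * A ^ 2 - 1 := sq_sqrt (by nlinarith)
  have hS1 : 1 ≤ S := by nlinarith [sqrt_nonneg (2 * A ^ 2 - 1)]
  -- `u = tanh (σ / 2)` for `e ^ σ = S`, the minimiser of `A e^{-σ} + sinh σ / A`
  set u := (S - 1) / (S + 1)
  have hu0 : 0 ≤ u := div_nonneg (by linarith) (by linarith)
  have hu1 : u < 1 := (div_lt_one (by linarith)).mpr (by linarith)
  have hnorm : ‖u • η‖ = u := by rw [norm_smul, hη, mul_one, norm_of_nonneg hu0]
  have hcosh : minkowski (toHyperboloid (u • η)) (toHyperboloid z) = S / A := by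
    rw [minkowski, toHyperboloid, hnorm, smul_smul, real_inner_smul_left, hinner]
    have : 0 < 1 - u ^ 2 := by nlinarith
    field_simp
    change (1 + u ^ 2) * A * A - u * 2 * (A ^ 2 - 1) = (1 - u ^ 2) * S
    simp only [u]
    field_simp
    linear_combination (-2) * hS2
  refine ⟨u, hu0, hu1, ?_⟩
  rw [hDist_eq_arcosh (hnorm.trans_lt hu1) hz, hcosh, ← arcosh_sqrt_two,
    arcosh_lt_arcosh (by positivity) (by positivity), div_lt_iff₀ (by positivity),
    ← sqrt_sq (by positivity : 0 ≤ A), ← sqrt_mul zero_le_two]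
  exact sqrt_lt_sqrt (by nlinarith) (by linarith)

end Disc

section Geodesic

variable {n : ℕ} {c : ℝ → EuclideanSpace ℝ (Fin n)}

lemma minkowski_geodesic (hin : ∀ t, ‖c t‖ < 1) (hgeo : ∀ s t : ℝ, hDist (c s) (c t) = |s - t|)
    (s t : ℝ) : minkowski (toHyperboloid (c s)) (toHyperboloid (c t)) = cosh (s - t) := by
  rw [← cosh_hDist (hin s) (hin t), hgeo, cosh_abs]

lemma geodesic_fst_add_fst (hin : ∀ t, ‖c t‖ < 1)
    (hgeo : ∀ s t : ℝ, hDist (c s) (c t) = |s - t|) (s u : ℝ) :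
    (toHyperboloid (c s)).1 + (toHyperboloid (c u)).1 =
      2 * cosh ((u - s) / 2) * (toHyperboloid (c ((s + u) / 2))).1 := by
  have hgeo' := minkowski_geodesic hin hgeo
  refine fst_add_fst_eq_of_minkowski (minkowski_toHyperboloid_self (hin s))
    (minkowski_toHyperboloid_self (hin _)) (minkowski_toHyperboloid_self (hin u)) ?_ ?_ ?_
  · rw [hgeo', ← cosh_neg]; ring_nf
  · rw [hgeo', ← cosh_neg]; ring_nf
  · rw [hgeo', ← cosh_neg, show -(s - u) = 2 * ((u - s) / 2) by ring, cosh_two_mul, sinh_sq]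
    ring

lemma minkowski_endpoint_of_fst_eq_mul_cosh (hin : ∀ t, ‖c t‖ < 1)
    (hgeo : ∀ s t : ℝ, hDist (c s) (c t) = |s - t|) {t₀ : ℝ}
    (hcosh : ∀ t, (toHyperboloid (c t)).1 = (toHyperboloid (c t₀)).1 * cosh (t - t₀))
    {η : EuclideanSpace ℝ (Fin n)} (hη : ‖η‖ = 1) (hlim : Tendsto c atTop (𝓝 η)) :
    minkowski (toHyperboloid (c t₀)) (1, η) = (toHyperboloid (c t₀)).1⁻¹ := by
  set A := (toHyperboloid (c t₀)).1
  have hA : 0 < A := fst_toHyperboloid_pos (hin t₀)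
  have hconst : ∀ t, minkowski (toHyperboloid (c t₀))
      ((toHyperboloid (c t)).1⁻¹ • toHyperboloid (c t)) = A⁻¹ := by
    intro t
    rw [minkowski_smul_right, minkowski_geodesic hin hgeo, hcosh, ← cosh_neg, neg_sub]
    field_simp [(cosh_pos (t - t₀)).ne']
  have hdir : Tendsto (fun t ↦ (toHyperboloid (c t)).1⁻¹ • toHyperboloid (c t)) atTop
      (𝓝 (1, η)) := by
    simp only [inv_fst_smul_toHyperboloid (hin _)]
    refine tendsto_const_nhds.prodMk_nhds ?_
    have hcont : Continuous fun x : EuclideanSpace ℝ (Fin n) ↦ (2 / (1 + ‖x‖ ^ 2)) • x :=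
      (continuous_const.div (continuous_const.add (continuous_norm.pow 2))
        fun x ↦ (by positivity : (0 : ℝ) < 1 + ‖x‖ ^ 2).ne').smul continuous_id
    simpa [Function.comp_def, hη, one_add_one_eq_two] using (hcont.tendsto η).comp hlim
  refine tendsto_nhds_unique (((continuous_minkowski_right _).tendsto _).comp hdir) ?_
  simp only [Function.comp_def, hconst]
  exact tendsto_const_nhds

end Geodesic

end PoincareBall

open PoincareBall

theorem schweikart_bound_general (c : ℝ → EuclideanSpace ℝ (Fin 2))
    (hin : ∀ t, ‖c t‖ < 1)
    (hgeo : ∀ s t : ℝ, hDist (c s) (c t) = |s - t|)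
    (t₀ : ℝ) (hsummit : ∀ t, hDist 0 (c t₀) ≤ hDist 0 (c t))
    (η : EuclideanSpace ℝ (Fin 2)) (hη : ‖η‖ = 1)
    (hlim : Filter.Tendsto c Filter.atTop (nhds η)) :
    ∃ u : ℝ, 0 ≤ u ∧ u < 1 ∧ hDist (u • η) (c t₀) < Real.log (1 + Real.sqrt 2) := by
  have hmin : ∀ t, (toHyperboloid (c t₀)).1 ≤ (toHyperboloid (c t)).1 := fun t ↦ by
    simpa only [hDist_zero_left (hin _), arcosh_le_arcosh (fst_toHyperboloid_pos (hin _))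
      (fst_toHyperboloid_pos (hin _))] using hsummit t
  have hcosh := eq_mul_cosh_of_midpoint (f := fun t ↦ (toHyperboloid (c t)).1)
    (geodesic_fst_add_fst hin hgeo) hmin
  exact exists_hDist_smul_lt_log_one_add_sqrt_two (hin t₀) hη
    (minkowski_endpoint_of_fst_eq_mul_cosh hin hgeo hcosh hη hlim)

/-- Schweikart's constant bound. For every hyperbolic geodesic `c` in the
Poincaré disc not passing through the origin, with summit `c t₀` (the point of the
geodesic closest to the origin), and with endpoint `η` on the boundary circle, the
radial geodesic ray from the origin to `η` comes within hyperbolic distance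
`log (1 + √2)` of the summit. -/
theorem schweikart_bound (c : ℝ → EuclideanSpace ℝ (Fin 2))
    (hin : ∀ t, ‖c t‖ < 1)
    (hgeo : ∀ s t : ℝ, hDist (c s) (c t) = |s - t|)
    (hnot0 : ∀ t, c t ≠ 0)
    (t₀ : ℝ) (hsummit : ∀ t, hDist 0 (c t₀) ≤ hDist 0 (c t))
    (η : EuclideanSpace ℝ (Fin 2)) (hη : ‖η‖ = 1)
    (hlim : Filter.Tendsto c Filter.atTop (nhds η)) :
    ∃ u : ℝ, 0 ≤ u ∧ u < 1 ∧ hDist (u • η) (c t₀) < Real.log (1 + Real.sqrt 2) :=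
  schweikart_bound_general c hin hgeo t₀ hsummit η hη hlim
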